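/- Let a,b,c > 0 and define f(x) = (c^4 + 3a^2b^2 x + 3a^4b^4 x^2 + a^6b^6c^4 x^3) / (b^6c^4 + 3a^2b^4 x + 3a^4b^2 x^2 + a^6c^4 x^3). Then the derivative of f at any x ≥ 0 equals 3a^2(b^4 − 1)·A(x) / [(b^2 + a^2 x)^2 (b^4c^4 + 3a^2b^2 x − a^2b^2c^4 x + a^4c^4 x^2)^2], where A(x) = b^4c^4 + 2a^2b^2c^4(1+b^4)x + a^4(3b^4 + c^8 + b^4c^8 + b^8c^8)x^2 + 2a^6b^2c^4(1+b^4)x^3 + a^8b^4c^4 x^4. -/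

import Mathlib

/-! The derivative is the quotient rule applied to two cubics `N / D`. The denominator factors
as `D = (b² + a²x) · Q`, so `D² = (b² + a²x)² Q²`, and what remains is the polynomial identity
`N' D - N D' = 3a²(b⁴ - 1) A`. Positivity of `D` on `[0, ∞)` comes from its nonnegative
coefficients and positive constant term. -/

theorem hasDerivAt_cubic {𝕜 : Type*} [NontriviallyNormedField 𝕜] (c₀ c₁ c₂ c₃ x : 𝕜) :
    HasDerivAt (fun x => c₀ + c₁ * x + c₂ * x ^ 2 + c₃ * x ^ 3)
      (c₁ + 2 * c₂ * x + 3 * c₃ * x ^ 2) x := by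
  have h₁ := (hasDerivAt_id x).const_mul c₁
  have h₂ := (hasDerivAt_pow 2 x).const_mul c₂
  have h₃ := (hasDerivAt_pow 3 x).const_mul c₃
  exact (((h₁.const_add c₀).add h₂).add h₃).congr_deriv (by norm_num; ring)

theorem f_hasDerivAt (a b c x : ℝ) (hb : 0 < b) (hc : 0 < c) (hx : 0 ≤ x) :
    HasDerivAt (fun x : ℝ =>
      (c^4 + 3*a^2*b^2*x + 3*a^4*b^4*x^2 + a^6*b^6*c^4*x^3) /
        (b^6*c^4 + 3*a^2*b^4*x + 3*a^4*b^2*x^2 + a^6*c^4*x^3))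
      (3*a^2*(b^4 - 1) *
        (b^4*c^4 + 2*a^2*b^2*c^4*(1+b^4)*x + a^4*(3*b^4 + c^8 + b^4*c^8 + b^8*c^8)*x^2
          + 2*a^6*b^2*c^4*(1+b^4)*x^3 + a^8*b^4*c^4*x^4) /
        ((b^2 + a^2*x)^2 * (b^4*c^4 + 3*a^2*b^2*x - a^2*b^2*c^4*x + a^4*c^4*x^2)^2))
      x := by
  have hD : 0 < b^6*c^4 + 3*a^2*b^4*x + 3*a^4*b^2*x^2 + a^6*c^4*x^3 := by positivity
  have hfactor : (b^2 + a^2*x) * (b^4*c^4 + 3*a^2*b^2*x - a^2*b^2*c^4*x + a^4*c^4*x^2)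
      = b^6*c^4 + 3*a^2*b^4*x + 3*a^4*b^2*x^2 + a^6*c^4*x^3 := by ring
  refine ((hasDerivAt_cubic _ _ _ _ x).div (hasDerivAt_cubic _ _ _ _ x) hD.ne').congr_deriv ?_
  rw [← mul_pow (b^2 + a^2*x), hfactor]
  congr 1
  ring
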